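/- Let n ≥ 3 be a natural number and let C be an equitable proper coloring of the helm graph H_n that uses exactly 4 colors, with colors indexed so that the class sizes are non-increasing. Then the equitable coloring mean of C equals (5n+1)/(2n+1). -/
import Mathlib


open Finset

/-- The size of the color class of color `i` under the coloring `c`. -/
def classSize {V : Type*} [Fintype V] {k : ℕ} (c : V → Fin k) (i : Fin k) : ℕ :=
  (Finset.univ.filter (fun v => c v = i)).card

/-- The equitable coloring mean `μ = (∑ i·θ_i)/N` (colors indexed `1,…,k`). -/
def eqMean {V : Type*} [Fintype V] {k : ℕ} (c : V → Fin k) : ℚ :=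
  (∑ i : Fin k, (((i : ℕ) : ℚ) + 1) * (classSize c i : ℚ)) / (Fintype.card V : ℚ)

/-- The equitable coloring variance `σ² = (∑ i²·θ_i)/N − μ²`. -/
def eqVar {V : Type*} [Fintype V] {k : ℕ} (c : V → Fin k) : ℚ :=
  (∑ i : Fin k, (((i : ℕ) : ℚ) + 1) ^ 2 * (classSize c i : ℚ)) / (Fintype.card V : ℚ)
    - (eqMean c) ^ 2

/-- The helm graph `H_n`: `none` is the central vertex, `some (Sum.inl i)` the rim
vertices `v_i`, `some (Sum.inr i)` the pendant vertices `u_i`. -/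
def helmGraph (n : ℕ) : SimpleGraph (Option (Fin n ⊕ Fin n)) :=
  SimpleGraph.fromRel (fun a b =>
    match a, b with
    | none, some (Sum.inl _) => True
    | some (Sum.inl i), some (Sum.inl j) => j.val = (i.val + 1) % n
    | some (Sum.inl i), some (Sum.inr j) => i = j
    | _, _ => False)

theorem helm_eqMean (n : ℕ) (hn : 3 ≤ n)
    (c : Option (Fin n ⊕ Fin n) → Fin (4))
    (hproper : ∀ u v, (helmGraph n).Adj u v → c u ≠ c v)
    (hsurj : Function.Surjective c)
    (hequit : ∀ i j : Fin (4), classSize c i ≤ classSize c j + 1)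
    (hmono : ∀ i j : Fin (4), i ≤ j → classSize c j ≤ classSize c i) :
    eqMean c = (5 * (n : ℚ) + 1) / (2 * (n : ℚ) + 1) := by
  have hcard : Fintype.card (Option (Fin n ⊕ Fin n)) = 2 * n + 1 := by
    simp [Fintype.card_option, Fintype.card_sum]; ring
  have hsum : ∑ i : Fin 4, classSize c i = 2 * n + 1 := by
    rw [← hcard, Fintype.card,
      Finset.card_eq_sum_card_fiberwise (f := c) (t := Finset.univ)
        (fun x _ => Finset.mem_univ _)]
    rfl
  rw [Fin.sum_univ_four] at hsum
  have h01 := hmono 0 1 (by decide)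
  have h12 := hmono 1 2 (by decide)
  have h23 := hmono 2 3 (by decide)
  have h03 := hequit 0 3
  have key : classSize c 0 + 2 * classSize c 1 + 3 * classSize c 2 + 4 * classSize c 3
      = 5 * n + 1 := by omega
  unfold eqMean
  rw [hcard, Fin.sum_univ_four]
  have e0 : ((0 : Fin 4) : ℕ) = 0 := rfl
  have e1 : ((1 : Fin 4) : ℕ) = 1 := rfl
  have e2 : ((2 : Fin 4) : ℕ) = 2 := rfl
  have e3 : ((3 : Fin 4) : ℕ) = 3 := rfl
  rw [e0, e1, e2, e3]
  have hnum : (classSize c 0 : ℚ) + 2 * classSize c 1 + 3 * classSize c 2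
      + 4 * classSize c 3 = 5 * n + 1 := by exact_mod_cast congrArg (Nat.cast : ℕ → ℚ) key
  push_cast
  rw [show ((0:ℚ)+1) = 1 by norm_num, show ((1:ℚ)+1) = 2 by norm_num,
    show ((2:ℚ)+1) = 3 by norm_num, show ((3:ℚ)+1) = 4 by norm_num, one_mul, hnum]
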